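/- Let (S,T),(U,V) be a twin cotorsion pair on B and B ∈ B, with b⁺ : B → B⁺ the canonical coreflection map. Then the following are equivalent: (a) B⁺ ∈ W; (b) B ∈ U; (c) the image of b⁺ in B/W is zero. -/

import Mathlib

open CategoryTheory Limits

universe v u

/-- An exact structure (Quillen exact category) on an additive category `C`:
a class of kernel-cokernel pairs (short exact sequences) satisfying Quillen's axioms. -/
structure ExactStructure (C : Type u) [Category.{v} C] [Preadditive C] where
  ses : ∀ ⦃X Y Z : C⦄, (X ⟶ Y) → (Y ⟶ Z) → Prop
  comp_zero : ∀ ⦃X Y Z : C⦄ ⦃i : X ⟶ Y⦄ ⦃d : Y ⟶ Z⦄, ses i d → i ≫ d = 0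
  is_kernel : ∀ ⦃X Y Z : C⦄ ⦃i : X ⟶ Y⦄ ⦃d : Y ⟶ Z⦄, ses i d →
    ∀ ⦃W : C⦄ (g : W ⟶ Y), g ≫ d = 0 → ∃! h : W ⟶ X, h ≫ i = g
  is_cokernel : ∀ ⦃X Y Z : C⦄ ⦃i : X ⟶ Y⦄ ⦃d : Y ⟶ Z⦄, ses i d →
    ∀ ⦃W : C⦄ (g : Y ⟶ W), i ≫ g = 0 → ∃! h : Z ⟶ W, d ≫ h = g
  id_infl : ∀ X : C, ∃ (Z : C) (d : X ⟶ Z), ses (𝟙 X) d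
  id_defl : ∀ X : C, ∃ (W : C) (i : W ⟶ X), ses i (𝟙 X)
  infl_comp : ∀ ⦃X Y Z : C⦄ (i : X ⟶ Y) (j : Y ⟶ Z),
    (∃ (A : C) (d : Y ⟶ A), ses i d) → (∃ (B : C) (e : Z ⟶ B), ses j e) →
    ∃ (A : C) (d : Z ⟶ A), ses (i ≫ j) d
  defl_comp : ∀ ⦃X Y Z : C⦄ (p : X ⟶ Y) (q : Y ⟶ Z),
    (∃ (A : C) (i : A ⟶ X), ses i p) → (∃ (B : C) (j : B ⟶ Y), ses j q) →
    ∃ (A : C) (i : A ⟶ X), ses i (p ≫ q)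
  pullback_defl : ∀ ⦃X Y Z : C⦄ ⦃i : X ⟶ Y⦄ ⦃d : Y ⟶ Z⦄, ses i d → ∀ ⦃Z' : C⦄ (f : Z' ⟶ Z),
    ∃ (Y' : C) (d' : Y' ⟶ Z') (g : Y' ⟶ Y), (∃ (X' : C) (i' : X' ⟶ Y'), ses i' d') ∧
      IsPullback d' g f d
  pushout_infl : ∀ ⦃X Y Z : C⦄ ⦃i : X ⟶ Y⦄ ⦃d : Y ⟶ Z⦄, ses i d → ∀ ⦃X' : C⦄ (g : X ⟶ X'),
    ∃ (Y' : C) (i' : X' ⟶ Y') (g' : Y ⟶ Y'), (∃ (Z' : C) (d' : Y' ⟶ Z'), ses i' d') ∧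
      IsPushout i g g' i'

variable {C : Type u} [Category.{v} C] [Preadditive C] [HasBinaryBiproducts C]

/-- `i` is an inflation (admissible monomorphism). -/
def ExactStructure.Inflation (E : ExactStructure C) {X Y : C} (i : X ⟶ Y) : Prop :=
  ∃ (Z : C) (d : Y ⟶ Z), E.ses i d

/-- `d` is a deflation (admissible epimorphism). -/
def ExactStructure.Deflation (E : ExactStructure C) {Y Z : C} (d : Y ⟶ Z) : Prop :=
  ∃ (X : C) (i : X ⟶ Y), E.ses i d

/-- `Ext^1(X, Y) = 0`: every short exact sequence `Y ↣ M ↠ X` splits. -/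
def ExactStructure.Ext1Zero (E : ExactStructure C) (X Y : C) : Prop :=
  ∀ ⦃M : C⦄ (i : Y ⟶ M) (d : M ⟶ X), E.ses i d → ∃ r : M ⟶ Y, i ≫ r = 𝟙 Y

/-- `P` is projective with respect to the exact structure. -/
def ExactStructure.Proj (E : ExactStructure C) (P : C) : Prop :=
  ∀ ⦃Y Z : C⦄ (d : Y ⟶ Z), E.Deflation d → ∀ g : P ⟶ Z, ∃ h : P ⟶ Y, h ≫ d = g

/-- `I` is injective with respect to the exact structure. -/
def ExactStructure.Inj (E : ExactStructure C) (I : C) : Prop :=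
  ∀ ⦃X Y : C⦄ (i : X ⟶ Y), E.Inflation i → ∀ g : X ⟶ I, ∃ h : Y ⟶ I, i ≫ h = g

def ExactStructure.EnoughProj (E : ExactStructure C) : Prop :=
  ∀ X : C, ∃ (P : C) (p : P ⟶ X), E.Proj P ∧ E.Deflation p

def ExactStructure.EnoughInj (E : ExactStructure C) : Prop :=
  ∀ X : C, ∃ (I : C) (i : X ⟶ I), E.Inj I ∧ E.Inflation i

/-- A class of objects is closed under direct summands (retracts). -/
def ClosedUnderSummands (U : Set C) : Prop :=
  ∀ ⦃X Y : C⦄ (s : Y ⟶ X) (r : X ⟶ Y), s ≫ r = 𝟙 Y → X ∈ U → Y ∈ U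

/-- A cotorsion pair `(U, V)` on an exact category. -/
structure IsCotorsionPair (E : ExactStructure C) (U V : Set C) : Prop where
  ext1 : ∀ ⦃A B : C⦄, A ∈ U → B ∈ V → E.Ext1Zero A B
  approx_left : ∀ B : C, ∃ (VB UB : C) (i : VB ⟶ UB) (d : UB ⟶ B),
    VB ∈ V ∧ UB ∈ U ∧ E.ses i d
  approx_right : ∀ B : C, ∃ (VB UB : C) (i : B ⟶ VB) (d : VB ⟶ UB),
    VB ∈ V ∧ UB ∈ U ∧ E.ses i d
  summands_left : ClosedUnderSummands U
  summands_right : ClosedUnderSummands V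

/-- The subcategory `B⁺` of a twin cotorsion pair, where `W = T ∩ U`. -/
def BPlus (E : ExactStructure C) (V W : Set C) : Set C :=
  fun B => ∃ (V' W' : C) (i : V' ⟶ W') (d : W' ⟶ B), V' ∈ V ∧ W' ∈ W ∧ E.ses i d

/-- The subcategory `B⁻` of a twin cotorsion pair, where `W = T ∩ U`. -/
def BMinus (E : ExactStructure C) (W S : Set C) : Set C :=
  fun B => ∃ (W' S' : C) (i : B ⟶ W') (d : W' ⟶ S'), W' ∈ W ∧ S' ∈ S ∧ E.ses i d

/-- `f` factors through an object of `W`. -/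
def FactorsThru (W : Set C) {X Y : C} (f : X ⟶ Y) : Prop :=
  ∃ (Z : C) (u : X ⟶ Z) (v : Z ⟶ Y), Z ∈ W ∧ u ≫ v = f

/-! Pushing out `V_B ↣ U_B ↠ B` along `u` exhibits `t : T^U ⟶ B⁺` as the cokernel, up to
isomorphism, of the composite inflation `V_B ↣ T^U`, whose kernel lies in `V`. Since
`Ext¹(U, V) = 0`, a factorization of `b⁺` through `W ⊆ U` lifts along `t` to some
`x : B ⟶ T^U` with `x ≫ t = b⁺`; then `x ≫ s^U = 0`, so `x` factors through `u`, and as `b⁺`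
is monic this splits `U_B ↠ B`, making `B` a summand of `U_B ∈ U`. Conversely, if `B ∈ U`
then `V_B ↣ U_B` splits, and its retraction extends along `u` because the cokernel `S^U` lies
in `S ⊆ U`; so `t` splits and `B⁺` is a summand of `T^U ∈ W`. -/

namespace ExactStructure

omit [HasBinaryBiproducts C]

variable (E : ExactStructure C) {X Y Z : C} {i : X ⟶ Y} {d : Y ⟶ Z}

lemma mono_of_ses (h : E.ses i d) : Mono i :=
  ⟨fun a b hab => by
    obtain ⟨_, -, huniq⟩ :=
      E.is_kernel h (a ≫ i) (by rw [Category.assoc, E.comp_zero h, Limits.comp_zero])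
    exact (huniq a rfl).trans (huniq b hab.symm).symm⟩

lemma epi_of_ses (h : E.ses i d) : Epi d :=
  ⟨fun a b hab => by
    obtain ⟨_, -, huniq⟩ :=
      E.is_cokernel h (d ≫ a) (by rw [← Category.assoc, E.comp_zero h, Limits.zero_comp])
    exact (huniq a rfl).trans (huniq b hab.symm).symm⟩

lemma exists_section_of_retraction (h : E.ses i d) {r : Y ⟶ X} (hr : i ≫ r = 𝟙 X) :
    ∃ s : Z ⟶ Y, s ≫ d = 𝟙 Z := by
  obtain ⟨s, hs, -⟩ := E.is_cokernel h (𝟙 Y - r ≫ i)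
    (by simp [Preadditive.comp_sub, reassoc_of% hr])
  have := E.epi_of_ses h
  refine ⟨s, (cancel_epi d).1 ?_⟩
  simp [reassoc_of% hs, Preadditive.sub_comp, E.comp_zero h]

lemma exists_kernel_retraction_of_isPullback {K M N K' M' Z : C} {j : K ⟶ M} {p : M ⟶ N}
    {j' : K' ⟶ M'} {p' : M' ⟶ Z} {q : M' ⟶ M} {g : Z ⟶ N}
    (h : E.ses j p) (h' : E.ses j' p') (hpb : IsPullback p' q g p) :
    ∃ (s : K' ⟶ K) (r : K ⟶ K'), s ≫ r = 𝟙 K' := by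
  obtain ⟨s, hs, -⟩ := E.is_kernel h (j' ≫ q)
    (by rw [Category.assoc, ← hpb.w, reassoc_of% (E.comp_zero h'), Limits.zero_comp])
  obtain ⟨r, hr, -⟩ := E.is_kernel h' (hpb.lift 0 j (by rw [Limits.zero_comp, E.comp_zero h]))
    (hpb.lift_fst _ _ _)
  have := E.mono_of_ses h'
  refine ⟨s, r, (cancel_mono j').1 (hpb.hom_ext ?_ ?_)⟩
  · simp [hr, E.comp_zero h']
  · simp [hr, hs]

lemma exists_cokernel_retraction_of_isPushout {K M N A M' N' : C} {j : K ⟶ M} {p : M ⟶ N}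
    {j' : A ⟶ M'} {p' : M' ⟶ N'} {g : K ⟶ A} {q : M ⟶ M'}
    (h : E.ses j p) (h' : E.ses j' p') (hpo : IsPushout j g q j') :
    ∃ (s : N' ⟶ N) (r : N ⟶ N'), s ≫ r = 𝟙 N' := by
  obtain ⟨s, hs, -⟩ := E.is_cokernel h' (hpo.desc p 0 (by rw [Limits.comp_zero, E.comp_zero h]))
    (hpo.inr_desc _ _ _)
  obtain ⟨r, hr, -⟩ := E.is_cokernel h (q ≫ p')
    (by rw [← Category.assoc, hpo.w, Category.assoc, E.comp_zero h', Limits.comp_zero])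
  have := E.epi_of_ses h'
  refine ⟨s, r, (cancel_epi p').1 (hpo.hom_ext ?_ ?_)⟩
  · simp [reassoc_of% hs, hr]
  · simp [reassoc_of% hs, E.comp_zero h']

section Pushout

variable {A X Y P : C} {f : A ⟶ X} {g : A ⟶ Y} {inl : X ⟶ P} {inr : Y ⟶ P}

lemma exists_ses_comp_of_isPushout {K : C} {i : K ⟶ A} (hi : E.ses i g) (hf : E.Inflation f)
    (hpo : IsPushout f g inl inr) :
    ∃ (Q : C) (c : X ⟶ Q) (φ : Q ≅ P), E.ses (i ≫ f) c ∧ c ≫ φ.hom = inl := by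
  obtain ⟨Q, c, h⟩ := E.infl_comp i f ⟨_, _, hi⟩ hf
  obtain ⟨φ, hφ, -⟩ := E.is_cokernel h inl
    (by rw [Category.assoc, hpo.w, reassoc_of% (E.comp_zero hi), Limits.zero_comp])
  obtain ⟨k, hk, -⟩ := E.is_cokernel hi (f ≫ c) (by rw [← Category.assoc, E.comp_zero h])
  have := E.epi_of_ses h
  have := E.epi_of_ses hi
  let ψ : P ⟶ Q := hpo.desc c k hk.symm
  refine ⟨Q, c, ⟨φ, ψ, (cancel_epi c).1 ?_, hpo.hom_ext ?_ ?_⟩, h, hφ⟩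
  · simp [reassoc_of% hφ, ψ]
  · simp [ψ, hφ]
  · refine (cancel_epi g).1 ?_
    simp [ψ, reassoc_of% hk, hφ, hpo.w]

lemma exists_section_of_comp_inl_eq_inr {Q : C} {c : X ⟶ Q} (hf : E.ses f c)
    (hpo : IsPushout f g inl inr) [Mono inr] {x : Y ⟶ X} (hx : x ≫ inl = inr) :
    ∃ z : Y ⟶ A, z ≫ g = 𝟙 Y := by
  have hxc : x ≫ c = 0 := by
    rw [← hpo.inl_desc c 0 (by rw [E.comp_zero hf, Limits.comp_zero]), reassoc_of% hx,
      hpo.inr_desc]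
  obtain ⟨z, hz, -⟩ := E.is_kernel hf x hxc
  exact ⟨z, (cancel_mono inr).1 (by simp [← hpo.w, reassoc_of% hz, hx])⟩

end Pushout

end ExactStructure

namespace IsCotorsionPair

omit [HasBinaryBiproducts C]

variable {E : ExactStructure C} {U V : Set C} (hUV : IsCotorsionPair E U V)
include hUV

lemma exists_lift {K M N : C} {j : K ⟶ M} {p : M ⟶ N} (h : E.ses j p) (hK : K ∈ V)
    {Z : C} (hZ : Z ∈ U) (g : Z ⟶ N) : ∃ l : Z ⟶ M, l ≫ p = g := by
  obtain ⟨M', p', q, ⟨K', j', h'⟩, hpb⟩ := E.pullback_defl h g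
  obtain ⟨s, r, hsr⟩ := E.exists_kernel_retraction_of_isPullback h h' hpb
  obtain ⟨ρ, hρ⟩ := hUV.ext1 hZ (hUV.summands_right s r hsr hK) j' p' h'
  obtain ⟨σ, hσ⟩ := E.exists_section_of_retraction h' hρ
  exact ⟨σ ≫ q, by rw [Category.assoc, ← hpb.w, reassoc_of% hσ]⟩

lemma exists_extension {A M N : C} {i : A ⟶ M} {p : M ⟶ N} (h : E.ses i p) (hN : N ∈ U)
    {Z : C} (hZ : Z ∈ V) (g : A ⟶ Z) : ∃ k : M ⟶ Z, i ≫ k = g := by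
  obtain ⟨M', i', q, ⟨N', p', h'⟩, hpo⟩ := E.pushout_infl h g
  obtain ⟨s, r, hsr⟩ := E.exists_cokernel_retraction_of_isPushout h h' hpo
  obtain ⟨ρ, hρ⟩ := hUV.ext1 (hUV.summands_left s r hsr hN) hZ i' p' h'
  exact ⟨q ≫ ρ, by rw [← Category.assoc, hpo.w, Category.assoc, hρ, Category.comp_id]⟩

end IsCotorsionPair

theorem coreflection_vanishing_tfae_general
    (E : ExactStructure C)
    {S T U V : Set C} (hST : IsCotorsionPair E S T) (hUV : IsCotorsionPair E U V)
    (hSU : S ⊆ U)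
    {B VB UB TU SU Bp : C}
    (vb : VB ⟶ UB) (d : UB ⟶ B) (u : UB ⟶ TU) (sU : TU ⟶ SU)
    (t : TU ⟶ Bp) (bp : B ⟶ Bp) (sp : Bp ⟶ SU)
    (h1 : E.ses vb d) (hVB : VB ∈ V) (hUB : UB ∈ U)
    (h2 : E.ses u sU) (hTU : TU ∈ T ∩ U) (hSUmem : SU ∈ S)
    (h3 : E.ses bp sp) (hPO : IsPushout u d t bp) :
    (Bp ∈ T ∩ U ↔ B ∈ U) ∧ (B ∈ U ↔ FactorsThru (T ∩ U) bp) := by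
  obtain ⟨Q, c, φ, hc, hcφ⟩ := E.exists_ses_comp_of_isPushout h1 ⟨_, _, h2⟩ hPO
  have := E.mono_of_ses h3
  have factors_imp_U : FactorsThru (T ∩ U) bp → B ∈ U := by
    rintro ⟨Z, f, g, hZ, rfl⟩
    obtain ⟨l, hl⟩ := hUV.exists_lift hc hVB hZ.2 (g ≫ φ.inv)
    obtain ⟨z, hz⟩ := E.exists_section_of_comp_inl_eq_inr h2 hPO (x := f ≫ l)
      (by simp [← hcφ, reassoc_of% hl])
    exact hUV.summands_left z d hz hUB
  have U_imp_W : B ∈ U → Bp ∈ T ∩ U := by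
    intro hB
    obtain ⟨r₀, hr₀⟩ := hUV.ext1 hB hVB vb d h1
    obtain ⟨r, hr⟩ := hUV.exists_extension h2 (hSU hSUmem) hVB r₀
    obtain ⟨σ, hσ⟩ := E.exists_section_of_retraction hc (r := r) (by simp [hr, hr₀])
    have hsplit : (φ.inv ≫ σ) ≫ t = 𝟙 Bp := by simp [← hcφ, reassoc_of% hσ]
    exact ⟨hST.summands_right _ _ hsplit hTU.1, hUV.summands_left _ _ hsplit hTU.2⟩
  have W_imp_factors (hW : Bp ∈ T ∩ U) : FactorsThru (T ∩ U) bp := ⟨Bp, bp, 𝟙 Bp, hW, by simp⟩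
  exact ⟨⟨factors_imp_U ∘ W_imp_factors, U_imp_W⟩, ⟨W_imp_factors ∘ U_imp_W, factors_imp_U⟩⟩

/-- for the coreflection `b⁺ : B → B⁺`, the following are equivalent:
`B⁺ ∈ W`; `B ∈ U`; the image of `b⁺` in `B/W` is zero. -/
theorem coreflection_vanishing_tfae
    (E : ExactStructure C) (hP : E.EnoughProj) (hI : E.EnoughInj)
    {S T U V : Set C} (hST : IsCotorsionPair E S T) (hUV : IsCotorsionPair E U V)
    (hSU : S ⊆ U)
    {B VB UB TU SU Bp : C}
    (vb : VB ⟶ UB) (d : UB ⟶ B) (u : UB ⟶ TU) (sU : TU ⟶ SU)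
    (t : TU ⟶ Bp) (bp : B ⟶ Bp) (sp : Bp ⟶ SU)
    (h1 : E.ses vb d) (hVB : VB ∈ V) (hUB : UB ∈ U)
    (h2 : E.ses u sU) (hTU : TU ∈ T ∩ U) (hSUmem : SU ∈ S)
    (h3 : E.ses bp sp) (hPO : IsPushout u d t bp) :
    (Bp ∈ T ∩ U ↔ B ∈ U) ∧ (B ∈ U ↔ FactorsThru (T ∩ U) bp) :=
  coreflection_vanishing_tfae_general E hST hUV hSU vb d u sU t bp sp h1 hVB hUB h2 hTU hSUmem h3
    hPO
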